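/- arXiv:2508.08624 — 2 statements merged into one kernel-verified Lean document; each statement's English description precedes it below -/
import Mathlib

section
/- Consider the problem: maximize Σ_{t=1}^T L_t x_t over x_t ∈ {0,1} and p_t ≥ 0 subject to Σ_{t=1}^T p_t ≤ TP and τB log₂(1 + h² p_t/σ²) ≥ x_t I + (1−x_t) S, where all channel gains are equal to h² > 0, I > S > 0, and the losses satisfy L_1 ≥ L_2 ≥ ⋯ ≥ L_T > 0. Let μ be the largest integer x with Ξ(x) ≤ TP, where Ξ(x) = x·(σ²2^{I/(τB)}−σ²)/h² + (T−x)·(σ²2^{S/(τB)}−σ²)/h². Then an optimal solution sets x_t = 1 for t ≤ μ and x_t = 0 for t > μ, with p_t equal to the minimum power meeting the rate constraint. -/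
/-! Every frame needs at least the power at which its rate constraint is tight, so a feasible
schedule uploading images on `k` frames spends at least `Xi k`; hence `k ≤ μ`. Since the losses are
sorted, no set of at most `μ` frames carries more loss than the first `μ` frames. -/

open Finset

noncomputable def minPower (σ2 h2 κ c : ℝ) : ℝ := σ2 / h2 * ((2 : ℝ) ^ (c / κ) - 1)

noncomputable def rate (σ2 h2 κ p : ℝ) : ℝ := κ * Real.logb 2 (1 + h2 * p / σ2)

section Power

variable {σ2 h2 κ : ℝ}

theorem minPower_nonneg (hσ : 0 ≤ σ2) (hh : 0 ≤ h2) (hκ : 0 ≤ κ) {c : ℝ} (hc : 0 ≤ c) :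
    0 ≤ minPower σ2 h2 κ c := by
  have hexp : (1 : ℝ) ≤ 2 ^ (c / κ) := Real.one_le_rpow (by norm_num) (by positivity)
  exact mul_nonneg (div_nonneg hσ hh) (sub_nonneg.mpr hexp)

theorem rate_minPower (hσ : σ2 ≠ 0) (hh : h2 ≠ 0) (hκ : κ ≠ 0) (c : ℝ) :
    rate σ2 h2 κ (minPower σ2 h2 κ c) = c := by
  have : 1 + h2 * minPower σ2 h2 κ c / σ2 = (2 : ℝ) ^ (c / κ) := by
    unfold minPower; field_simp; ring
  rw [rate, this, Real.logb_rpow (by norm_num) (by norm_num)]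
  field_simp

theorem minPower_le_of_le_rate (hσ : 0 < σ2) (hh : 0 < h2) (hκ : 0 < κ) {c p : ℝ}
    (hp : 0 ≤ p) (hc : c ≤ rate σ2 h2 κ p) : minPower σ2 h2 κ c ≤ p := by
  have hpos : 0 < 1 + h2 * p / σ2 := by positivity
  have hexp : (2 : ℝ) ^ (c / κ) ≤ 1 + h2 * p / σ2 := by
    calc (2 : ℝ) ^ (c / κ) ≤ 2 ^ Real.logb 2 (1 + h2 * p / σ2) :=
          (Real.rpow_le_rpow_left_iff one_lt_two).mpr <| by rw [div_le_iff₀ hκ, mul_comm]; exact hc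
      _ = 1 + h2 * p / σ2 := Real.rpow_logb two_pos (by norm_num) hpos
  unfold minPower
  rw [div_mul_eq_mul_div, div_le_iff₀ hh, mul_sub, mul_one, sub_le_iff_le_add]
  calc σ2 * 2 ^ (c / κ) ≤ σ2 * (1 + h2 * p / σ2) := by gcongr
    _ = p * h2 + σ2 := by field_simp; ring

end Power

theorem Finset.sum_le_sum_of_card_le_of_antitone {ι M : Type*} [LinearOrder ι] [AddCommMonoid M]
    [PartialOrder M] [IsOrderedAddMonoid M] {f : ι → M} {s t : Finset ι} (hf : Antitone f)
    (hf0 : ∀ i ∈ t, 0 ≤ f i) (ht : ∀ i ∈ t, ∀ j ∉ t, i ≤ j) (hst : #s ≤ #t) :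
    ∑ i ∈ s, f i ≤ ∑ i ∈ t, f i := by
  rcases (t \ s).eq_empty_or_nonempty with h | h
  · rw [eq_of_subset_of_card_le (sdiff_eq_empty_iff_subset.mp h) hst]
  set i₀ := (t \ s).max' h
  have hi₀ : i₀ ∈ t := (mem_sdiff.mp ((t \ s).max'_mem h)).1
  -- `f i₀` separates the values of `f` on `s \ t` from those on `t \ s`
  calc ∑ i ∈ s, f i = ∑ i ∈ s ∩ t, f i + ∑ i ∈ s \ t, f i := (sum_inter_add_sum_sdiff s t f).symm
    _ ≤ ∑ i ∈ t ∩ s, f i + #(s \ t) • f i₀ := by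
      rw [inter_comm]
      gcongr
      exact sum_le_card_nsmul _ _ _ fun j hj => hf (ht i₀ hi₀ j (mem_sdiff.mp hj).2)
    _ ≤ ∑ i ∈ t ∩ s, f i + #(t \ s) • f i₀ :=
      add_le_add_right (nsmul_le_nsmul_left (hf0 i₀ hi₀) (card_sdiff_le_card_sdiff_iff.mpr hst)) _
    _ ≤ ∑ i ∈ t ∩ s, f i + ∑ i ∈ t \ s, f i := by
      gcongr
      exact card_nsmul_le_sum _ _ _ fun i hi => hf ((t \ s).le_max' i hi)
    _ = ∑ i ∈ t, f i := sum_inter_add_sum_sdiff t s f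

theorem Fintype.sum_comp_eq_of_forall_eq_zero_or_eq_one {ι : Type*} [Fintype ι] {x : ι → ℝ}
    (hx : ∀ i, x i = 0 ∨ x i = 1) (g : ℝ → ℝ) :
    ∑ i, g (x i) = #{i | x i = 1} * g 1 + (Fintype.card ι - #{i | x i = 1}) * g 0 := by
  have hcard := card_filter_add_card_filter_not (s := univ) (fun i => x i = 1)
  rw [card_univ] at hcard
  have hone : ∑ i with x i = 1, g (x i) = ∑ i with x i = 1, g 1 :=
    Finset.sum_congr rfl fun i hi => by rw [(mem_filter.mp hi).2]
  have hzero : ∑ i with ¬x i = 1, g (x i) = ∑ i with ¬x i = 1, g 0 :=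
    Finset.sum_congr rfl fun i hi => by rw [(hx i).resolve_right (mem_filter.mp hi).2]
  rw [← sum_filter_add_sum_filter_not univ (fun i => x i = 1), hone, hzero,
    sum_const, sum_const, nsmul_eq_mul, nsmul_eq_mul, ← hcard]
  push_cast
  ring

theorem Fintype.sum_mul_eq_sum_filter_of_forall_eq_zero_or_eq_one {ι : Type*} [Fintype ι]
    {x : ι → ℝ} (hx : ∀ i, x i = 0 ∨ x i = 1) (L : ι → ℝ) :
    ∑ i, L i * x i = ∑ i with x i = 1, L i := by
  rw [sum_filter]
  refine Finset.sum_congr rfl fun i _ => ?_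
  rcases hx i with h | h <;> simp [h]

theorem ranking_optimal_equal_channels_general (T : ℕ)
    (τ B σ2 h2 I S P : ℝ) (L : Fin T → ℝ)
    (hτ : 0 < τ) (hB : 0 < B) (hσ : 0 < σ2) (hh : 0 < h2)
    (hS : 0 < S) (hIS : S < I)
    (hLpos : ∀ t, 0 < L t) (hLsorted : ∀ s t : Fin T, s ≤ t → L t ≤ L s)
    (Xi : ℕ → ℝ)
    (hXi : ∀ x : ℕ, Xi x = x * ((σ2 * (2:ℝ) ^ (I / (τ * B)) - σ2) / h2) +
      ((T : ℝ) - x) * ((σ2 * (2:ℝ) ^ (S / (τ * B)) - σ2) / h2))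
    (μ : ℕ) (hμT : μ ≤ T) (hμ1 : Xi μ ≤ T * P)
    (hμ2 : ∀ ν : ℕ, ν ≤ T → Xi ν ≤ T * P → ν ≤ μ)
    (feasible : (Fin T → ℝ) → (Fin T → ℝ) → Prop)
    (hfeas : ∀ x p, feasible x p ↔
      (∀ t, x t = 0 ∨ x t = 1) ∧ (∀ t, 0 ≤ p t) ∧
      (∀ t, τ * B * Real.logb 2 (1 + h2 * p t / σ2) ≥ x t * I + (1 - x t) * S) ∧
      (∑ t, p t) ≤ T * P)
    (xstar pstar : Fin T → ℝ)
    (hxstar : ∀ t : Fin T, xstar t = if (t : ℕ) < μ then 1 else 0)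
    (hpstar : ∀ t : Fin T, pstar t =
      σ2 / h2 * ((2:ℝ) ^ ((xstar t * I + (1 - xstar t) * S) / (τ * B)) - 1)) :
    feasible xstar pstar ∧
      ∀ x p, feasible x p → (∑ t, L t * x t) ≤ ∑ t, L t * xstar t := by
  have hκ : 0 < τ * B := mul_pos hτ hB
  have hXi_eq : ∀ x : Fin T → ℝ, (∀ t, x t = 0 ∨ x t = 1) →
      ∑ t, minPower σ2 h2 (τ * B) (x t * I + (1 - x t) * S) = Xi #{t | x t = 1} := by
    intro x hx
    refine (Fintype.sum_comp_eq_of_forall_eq_zero_or_eq_one hx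
      fun y => minPower σ2 h2 (τ * B) (y * I + (1 - y) * S)).trans ?_
    rw [hXi, Fintype.card_fin]
    simp only [minPower]
    ring_nf
  obtain rfl : pstar = fun t => minPower σ2 h2 (τ * B) (xstar t * I + (1 - xstar t) * S) :=
    funext hpstar
  have hxstar01 : ∀ t, xstar t = 0 ∨ xstar t = 1 := fun t => by rw [hxstar]; split_ifs <;> simp
  have hsupp : ({t | xstar t = 1} : Finset (Fin T)) = ({t | (t : ℕ) < μ} : Finset (Fin T)) := by
    ext t; simp [hxstar]
  have hcard : #{t : Fin T | (t : ℕ) < μ} = μ := by rw [Fin.card_filter_val_lt, min_eq_right hμT]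
  refine ⟨(hfeas _ _).mpr ⟨hxstar01, fun t => ?_, fun t => ?_, ?_⟩, fun x p hxp => ?_⟩
  · refine minPower_nonneg hσ.le hh.le hκ.le ?_
    rcases hxstar01 t with h | h <;> rw [h] <;> linarith
  · exact (rate_minPower hσ.ne' hh.ne' hκ.ne' _).ge
  · rw [hXi_eq xstar hxstar01, hsupp, hcard]
    exact hμ1
  obtain ⟨hx01, hp, hrate, hsum⟩ := (hfeas x p).mp hxp
  have hcard_le : #{t | x t = 1} ≤ μ := by
    refine hμ2 _ ((card_filter_le _ _).trans_eq (card_fin T)) ?_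
    rw [← hXi_eq x hx01]
    exact (sum_le_sum fun t _ => minPower_le_of_le_rate hσ hh hκ (hp t) (hrate t)).trans hsum
  rw [Fintype.sum_mul_eq_sum_filter_of_forall_eq_zero_or_eq_one hx01,
    Fintype.sum_mul_eq_sum_filter_of_forall_eq_zero_or_eq_one hxstar01, hsupp]
  refine sum_le_sum_of_card_le_of_antitone (fun s t hst => hLsorted s t hst)
    (fun t _ => (hLpos t).le) (fun i hi j hj => ?_) (hcard.symm ▸ hcard_le)
  simp only [mem_filter, mem_univ, true_and, not_lt] at hi hj
  exact Fin.le_def.mpr (by omega)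

/-- Proposition 2: with equal channel gains and losses sorted in descending
order, the ranking solution (upload images on the `μ` largest-loss frames,
poses elsewhere, with minimal powers) is optimal, i.e. it is feasible and
maximizes `∑ L_t x_t` among all feasible solutions. -/
theorem ranking_optimal_equal_channels (T : ℕ) (hT : 1 ≤ T)
    (τ B σ2 h2 I S P : ℝ) (L : Fin T → ℝ)
    (hτ : 0 < τ) (hB : 0 < B) (hσ : 0 < σ2) (hh : 0 < h2)
    (hS : 0 < S) (hIS : S < I)
    (hLpos : ∀ t, 0 < L t) (hLsorted : ∀ s t : Fin T, s ≤ t → L t ≤ L s)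
    (Xi : ℕ → ℝ)
    (hXi : ∀ x : ℕ, Xi x = x * ((σ2 * (2:ℝ) ^ (I / (τ * B)) - σ2) / h2) +
      ((T : ℝ) - x) * ((σ2 * (2:ℝ) ^ (S / (τ * B)) - σ2) / h2))
    (hfeas0 : Xi 0 ≤ T * P)
    (μ : ℕ) (hμT : μ ≤ T) (hμ1 : Xi μ ≤ T * P)
    (hμ2 : ∀ ν : ℕ, ν ≤ T → Xi ν ≤ T * P → ν ≤ μ)
    (feasible : (Fin T → ℝ) → (Fin T → ℝ) → Prop)
    (hfeas : ∀ x p, feasible x p ↔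
      (∀ t, x t = 0 ∨ x t = 1) ∧ (∀ t, 0 ≤ p t) ∧
      (∀ t, τ * B * Real.logb 2 (1 + h2 * p t / σ2) ≥ x t * I + (1 - x t) * S) ∧
      (∑ t, p t) ≤ T * P)
    (xstar pstar : Fin T → ℝ)
    (hxstar : ∀ t : Fin T, xstar t = if (t : ℕ) < μ then 1 else 0)
    (hpstar : ∀ t : Fin T, pstar t =
      σ2 / h2 * ((2:ℝ) ^ ((xstar t * I + (1 - xstar t) * S) / (τ * B)) - 1)) :
    feasible xstar pstar ∧
      ∀ x p, feasible x p → (∑ t, L t * x t) ≤ ∑ t, L t * xstar t :=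
  ranking_optimal_equal_channels_general T τ B σ2 h2 I S P L hτ hB hσ hh hS hIS hLpos hLsorted Xi
    hXi μ hμT hμ1 hμ2 feasible hfeas xstar pstar hxstar hpstar
end

section
/- In any optimal solution (x*, p*) of the problem: minimize Σ_t L_t(1−x_t) subject to τB log₂(1 + h_t² p_t/σ²) ≥ x_t I + (1−x_t)S, Σ_t p_t ≤ TP, p_t ≥ 0, x_t ∈ {0,1}, with L_t > 0 for all t, if Σ_t p_t* < TP strictly and there exists t with x_t* = 0 such that the extra power (σ²/h_t²)(2^{I/(τB)} − 2^{S/(τB)}) fits within the remaining budget, then the solution is not optimal; equivalently, at optimality either all x_t* = 1 or for every t with x_t* = 0 switching x_t to 1 (with minimal power) would violate the power budget. -/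
/-- Exchange argument in the proof of Proposition 2: with strictly positive
losses and powers taken at the minimal values activating the rate constraint,
at optimality either all frames upload images, or for every frame uploading a
pose, switching it to an image upload would violate the power budget. -/
theorem no_budget_slack_at_optimum (T : ℕ) (τ B σ2 I S P : ℝ)
    (h2 : Fin T → ℝ) (L : Fin T → ℝ)
    (hτ : 0 < τ) (hB : 0 < B) (hσ : 0 < σ2) (hh : ∀ t, 0 < h2 t)
    (hS : 0 < S) (hIS : S < I) (hL : ∀ t, 0 < L t)
    (pmin : (Fin T → ℝ) → Fin T → ℝ)
    (hpmin : ∀ x t, pmin x t =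
      σ2 / h2 t * ((2:ℝ) ^ ((x t * I + (1 - x t) * S) / (τ * B)) - 1))
    (xstar : Fin T → ℝ)
    (hbin : ∀ t, xstar t = 0 ∨ xstar t = 1)
    (hbudget : (∑ t, pmin xstar t) ≤ T * P)
    (hopt : ∀ x : Fin T → ℝ, (∀ t, x t = 0 ∨ x t = 1) →
      (∑ t, pmin x t) ≤ T * P →
      (∑ t, L t * (1 - xstar t)) ≤ ∑ t, L t * (1 - x t)) :
    (∀ t, xstar t = 1) ∨
      ∀ t, xstar t = 0 →
        T * P < (∑ t, pmin xstar t) +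
          σ2 / h2 t * ((2:ℝ) ^ (I / (τ * B)) - (2:ℝ) ^ (S / (τ * B))) := by
  by_contra hcon
  push_neg at hcon
  obtain ⟨-, t0, hx0, hle⟩ := hcon
  set x' : Fin T → ℝ := Function.update xstar t0 1 with hx'
  have hbin' : ∀ t, x' t = 0 ∨ x' t = 1 := by
    intro t
    by_cases ht : t = t0
    · right; simp [hx', ht]
    · simpa [hx', Function.update_of_ne ht] using hbin t
  have hxt0 : x' t0 = 1 := by simp [hx']
  have hdiff : pmin x' t0 - pmin xstar t0 =
      σ2 / h2 t0 * ((2:ℝ) ^ (I / (τ * B)) - (2:ℝ) ^ (S / (τ * B))) := by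
    rw [hpmin, hpmin, hxt0, hx0]
    norm_num
    ring
  have heq : ∀ t, t ≠ t0 → pmin x' t = pmin xstar t := by
    intro t ht
    rw [hpmin, hpmin, hx', Function.update_of_ne ht]
  have hsum : (∑ t, pmin x' t) = (∑ t, pmin xstar t) +
      σ2 / h2 t0 * ((2:ℝ) ^ (I / (τ * B)) - (2:ℝ) ^ (S / (τ * B))) := by
    rw [← hdiff]
    have : (∑ t, (pmin x' t - pmin xstar t)) = pmin x' t0 - pmin xstar t0 := by
      apply Finset.sum_eq_single
      · intro b _ hb
        rw [heq b hb]; ring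
      · intro h; exact absurd (Finset.mem_univ t0) h
    have h2' := Finset.sum_sub_distrib (f := fun t => pmin x' t)
      (g := fun t => pmin xstar t) (s := Finset.univ)
    rw [h2'] at this
    linarith
  have hbudget' : (∑ t, pmin x' t) ≤ T * P := by rw [hsum]; linarith
  have hobj : (∑ t, L t * (1 - x' t)) =
      (∑ t, L t * (1 - xstar t)) - L t0 := by
    have : (∑ t, (L t * (1 - x' t) - L t * (1 - xstar t))) = -L t0 := by
      rw [Finset.sum_eq_single t0]
      · rw [hxt0, hx0]; ring
      · intro b _ hb
        rw [hx', Function.update_of_ne hb]; ring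
      · intro h; exact absurd (Finset.mem_univ t0) h
    rw [Finset.sum_sub_distrib] at this
    linarith
  have := hopt x' hbin' hbudget'
  rw [hobj] at this
  have := hL t0
  linarith
end
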